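/- Let ψ : ℝ → ℂ be smooth, compactly supported, and vanishing in a neighborhood of 0. Then the function u(t,x,y) = ∫_ℝ ψ(η) (|η|/π)^{1/4} e^{−|η|x²/2} e^{i(yη − |η|t)} dη is smooth on ℝ × ℝ² and satisfies the Grushin–Schrödinger equation i∂_t u + ∂ₓ²u + x²∂_y²u = 0 at every point. (These are the solutions, built purely from the ground-state mode of the harmonic oscillator, which travel slowly along the y-axis and are used to obtain the minimal time of observability for the Grushin–Schrödinger equation.) -/

import Mathlib

open Real Complex MeasureTheory

noncomputable section

/-- The slow ground-state solution
`u(t,x,y) = ∫ ψ(η) (|η|/π)^{1/4} e^{-|η|x²/2} e^{i(yη - |η|t)} dη`. -/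
def slowSol (ψ : ℝ → ℂ) (t x y : ℝ) : ℂ :=
  ∫ η : ℝ, ψ η * ((|η| / π) ^ ((1 : ℝ) / 4) : ℝ) *
    (Real.exp (-(|η| * x ^ 2 / 2)) : ℝ) *
    Complex.exp (Complex.I * ((y * η - |η| * t : ℝ) : ℂ))

namespace S15

def pd (H : ℝ → ℝ → ℂ) : ℝ → ℝ → ℂ := fun s η => deriv (fun s' => H s' η) s

lemma hasDerivAt_pd (H : ℝ → ℝ → ℂ) (hH : ContDiff ℝ (⊤ : ℕ∞) ↿H) (s η : ℝ) :
    HasDerivAt (fun s' => H s' η) (fderiv ℝ ↿H (s, η) (1, 0)) s := by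
  have h1 : HasFDerivAt ↿H (fderiv ℝ ↿H (s, η)) (s, η) :=
    (hH.differentiable (by simp) (s, η)).hasFDerivAt
  have h2 : HasDerivAt (fun s' : ℝ => ((s', η) : ℝ × ℝ)) ((1 : ℝ), (0 : ℝ)) s :=
    (hasDerivAt_id s).prodMk (hasDerivAt_const s η)
  exact h1.comp_hasDerivAt s h2

lemma pd_eq (H : ℝ → ℝ → ℂ) (hH : ContDiff ℝ (⊤ : ℕ∞) ↿H) :
    pd H = fun s η => fderiv ℝ ↿H (s, η) (1, 0) :=
  funext fun s => funext fun η => (hasDerivAt_pd H hH s η).deriv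

lemma contDiff_pd (H : ℝ → ℝ → ℂ) (hH : ContDiff ℝ (⊤ : ℕ∞) ↿H) :
    ContDiff ℝ (⊤ : ℕ∞) ↿(pd H) := by
  have h : ContDiff ℝ (⊤ : ℕ∞) (fderiv ℝ ↿H) := hH.fderiv_right (by simp)
  have h2 : ContDiff ℝ (⊤ : ℕ∞) (fun p : ℝ × ℝ => fderiv ℝ ↿H p ((1 : ℝ), (0 : ℝ))) :=
    h.clm_apply contDiff_const
  have e : ↿(pd H) = fun p : ℝ × ℝ => fderiv ℝ ↿H p ((1 : ℝ), (0 : ℝ)) := by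
    funext p
    show pd H p.1 p.2 = _
    rw [pd_eq H hH]
  rw [e]; exact h2

lemma pd_support (H : ℝ → ℝ → ℂ) (K : Set ℝ)
    (hsupp : ∀ s η, η ∉ K → H s η = 0) : ∀ s η, η ∉ K → pd H s η = 0 := by
  intro s η hη
  have : (fun s' => H s' η) = fun _ => 0 := funext fun s' => hsupp s' η hη
  simp [pd, this]

lemma key (H : ℝ → ℝ → ℂ) (hH : ContDiff ℝ (⊤ : ℕ∞) ↿H) (K : Set ℝ) (hK : IsCompact K)
    (hsupp : ∀ s η, η ∉ K → H s η = 0) (s₀ : ℝ) :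
    HasDerivAt (fun s => ∫ η, H s η) (∫ η, pd H s₀ η) s₀ := by
  have hcont : ∀ s, Continuous (fun η => H s η) := fun s =>
    hH.continuous.comp (Continuous.prodMk_right s)
  have hDc : Continuous ↿(pd H) := (contDiff_pd H hH).continuous
  have hDcont : ∀ s, Continuous (fun η => pd H s η) := fun s =>
    hDc.comp (Continuous.prodMk_right s)
  obtain ⟨C, hC⟩ : ∃ C, ∀ q ∈ (Metric.closedBall s₀ 1) ×ˢ K, ‖pd H q.1 q.2‖ ≤ C :=
    ((isCompact_closedBall s₀ 1).prod hK).exists_bound_of_continuousOn hDc.continuousOn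
  have hFi : ∀ s, Integrable (fun η => H s η) := fun s =>
    (hcont s).integrable_of_hasCompactSupport
      (HasCompactSupport.intro hK fun η hη => hsupp s η hη)
  have := (hasDerivAt_integral_of_dominated_loc_of_deriv_le (F := H)
      (F' := fun s η => pd H s η) (bound := K.indicator fun _ => C)
      (Metric.ball_mem_nhds s₀ one_pos)
      (Filter.Eventually.of_forall fun s => (hcont s).aestronglyMeasurable)
      (hFi s₀)
      ((hDcont s₀).aestronglyMeasurable)
      ?_ ?_ ?_).2
  · exact this
  · refine Filter.Eventually.of_forall fun η s hs => ?_
    by_cases hη : η ∈ K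
    · rw [Set.indicator_of_mem hη]
      exact hC (s, η) ⟨Metric.ball_subset_closedBall hs, hη⟩
    · show ‖pd H s η‖ ≤ _
      rw [Set.indicator_of_notMem hη, pd_support H K hsupp s η hη]
      simp
  · rw [integrable_indicator_iff hK.measurableSet]
    exact integrableOn_const hK.measure_lt_top.ne
  · refine Filter.Eventually.of_forall fun η s _ => ?_
    have h := hasDerivAt_pd H hH s η
    have e : pd H s η = fderiv ℝ ↿H (s, η) (1, 0) := by rw [pd_eq H hH]
    show HasDerivAt (fun x => H x η) (pd H s η) s
    rw [e]; exact h

lemma key_deriv (H : ℝ → ℝ → ℂ) (hH : ContDiff ℝ (⊤ : ℕ∞) ↿H) (K : Set ℝ) (hK : IsCompact K)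
    (hsupp : ∀ s η, η ∉ K → H s η = 0) :
    deriv (fun s => ∫ η, H s η) = fun s => ∫ η, pd H s η :=
  funext fun s => (key H hH K hK hsupp s).deriv

def ker (ψ : ℝ → ℂ) (p : ℝ × ℝ × ℝ) (η : ℝ) : ℂ :=
  ψ η * ((|η| / π) ^ ((1 : ℝ) / 4) : ℝ) *
    (Real.exp (-(|η| * p.2.1 ^ 2 / 2)) : ℝ) *
    Complex.exp (Complex.I * ((p.2.2 * η - |η| * p.1 : ℝ) : ℂ))

lemma ker_smooth (ψ : ℝ → ℂ) (hψsmooth : ContDiff ℝ (⊤ : ℕ∞) ψ)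
    (hψ0 : ∃ ε > (0 : ℝ), ∀ η : ℝ, |η| < ε → ψ η = 0) :
    ContDiff ℝ (⊤ : ℕ∞) (fun q : (ℝ × ℝ × ℝ) × ℝ => ker ψ q.1 q.2) := by
  rw [contDiff_iff_contDiffAt]
  intro q
  by_cases hq : q.2 = 0
  · obtain ⟨ε, hε, h0⟩ := hψ0
    have hU : IsOpen {q' : (ℝ × ℝ × ℝ) × ℝ | |q'.2| < ε} :=
      isOpen_lt (continuous_snd.abs) continuous_const
    have hmem : q ∈ {q' : (ℝ × ℝ × ℝ) × ℝ | |q'.2| < ε} := by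
      simp [Set.mem_setOf_eq, hq, hε]
    have heq : (fun q' : (ℝ × ℝ × ℝ) × ℝ => ker ψ q'.1 q'.2) =ᶠ[nhds q]
        fun _ => (0 : ℂ) := by
      filter_upwards [hU.mem_nhds hmem] with q' hq'
      simp [ker, h0 q'.2 hq']
    exact (contDiffAt_const (c := (0:ℂ))).congr_of_eventuallyEq heq
  · have habs : ContDiffAt ℝ (⊤ : ℕ∞) (fun q' : (ℝ × ℝ × ℝ) × ℝ => |q'.2|) q :=
      (contDiffAt_abs hq).comp q contDiffAt_snd
    have h1 : ContDiffAt ℝ (⊤ : ℕ∞) (fun q' : (ℝ × ℝ × ℝ) × ℝ => ψ q'.2) q :=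
      (hψsmooth.comp contDiff_snd).contDiffAt
    have h2r : ContDiffAt ℝ (⊤ : ℕ∞)
        (fun q' : (ℝ × ℝ × ℝ) × ℝ => (|q'.2| / π) ^ ((1 : ℝ) / 4)) q := by
      refine ContDiffAt.rpow_const_of_ne (habs.div_const π) ?_
      simp only [div_ne_zero_iff]
      exact ⟨abs_ne_zero.2 hq, Real.pi_ne_zero⟩
    have h2 : ContDiffAt ℝ (⊤ : ℕ∞)
        (fun q' : (ℝ × ℝ × ℝ) × ℝ => (((|q'.2| / π) ^ ((1 : ℝ) / 4) : ℝ) : ℂ)) q :=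
      Complex.ofRealCLM.contDiff.contDiffAt.comp q h2r
    have h3r : ContDiffAt ℝ (⊤ : ℕ∞)
        (fun q' : (ℝ × ℝ × ℝ) × ℝ => Real.exp (-(|q'.2| * q'.1.2.1 ^ 2 / 2))) q := by
      refine ContDiffAt.exp ?_
      exact (((habs.mul (((contDiff_fst.snd.fst).pow 2).contDiffAt)).div_const 2).neg)
    have h3 : ContDiffAt ℝ (⊤ : ℕ∞)
        (fun q' : (ℝ × ℝ × ℝ) × ℝ => ((Real.exp (-(|q'.2| * q'.1.2.1 ^ 2 / 2)) : ℝ) : ℂ)) q :=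
      Complex.ofRealCLM.contDiff.contDiffAt.comp q h3r
    have h4r : ContDiffAt ℝ (⊤ : ℕ∞)
        (fun q' : (ℝ × ℝ × ℝ) × ℝ => q'.1.2.2 * q'.2 - |q'.2| * q'.1.1) q :=
      ((contDiff_fst.snd.snd.contDiffAt).mul contDiffAt_snd).sub
        (habs.mul (contDiff_fst.fst.contDiffAt))
    have h4 : ContDiffAt ℝ (⊤ : ℕ∞)
        (fun q' : (ℝ × ℝ × ℝ) × ℝ =>
          Complex.exp (Complex.I * ((q'.1.2.2 * q'.2 - |q'.2| * q'.1.1 : ℝ) : ℂ))) q := by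
      refine ContDiffAt.cexp ?_
      exact contDiffAt_const.mul (Complex.ofRealCLM.contDiff.contDiffAt.comp q h4r)
    exact ((h1.mul h2).mul h3).mul h4

variable (ψ : ℝ → ℂ)

lemma hdt (x y η s : ℝ) :
    HasDerivAt (fun t' => ker ψ (t', x, y) η)
      (-(Complex.I * ((|η| : ℝ) : ℂ)) * ker ψ (s, x, y) η) s := by
  have h0 : HasDerivAt (fun t' : ℝ => y * η - |η| * t') (-|η|) s := by
    exact ((hasDerivAt_const s (y * η)).sub ((hasDerivAt_id s).const_mul |η|)).congr_deriv (by ring)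
  have h2 := ((h0.ofReal_comp).const_mul Complex.I).cexp
  have h3 := h2.const_mul (ψ η * ((|η| / π) ^ ((1 : ℝ) / 4) : ℝ) *
    (Real.exp (-(|η| * x ^ 2 / 2)) : ℝ))
  refine h3.congr_deriv ?_
  simp only [ker]
  push_cast
  ring

lemma hdx (t y η s : ℝ) :
    HasDerivAt (fun x' => ker ψ (t, x', y) η)
      (-(((|η| : ℝ) : ℂ) * s) * ker ψ (t, s, y) η) s := by
  have h0 : HasDerivAt (fun x' : ℝ => -(|η| * x' ^ 2 / 2)) (-(|η| * s)) s := by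
    have := (((hasDerivAt_pow 2 s).const_mul |η|).div_const 2).neg
    exact this.congr_deriv (by ring)
  have h1 := (h0.exp).ofReal_comp
  have h2 := (h1.const_mul (ψ η * ((|η| / π) ^ ((1 : ℝ) / 4) : ℝ))).mul_const
    (Complex.exp (Complex.I * ((y * η - |η| * t : ℝ) : ℂ)))
  refine h2.congr_deriv ?_
  simp only [ker]
  push_cast
  ring

lemma hdx2 (t y η x : ℝ) :
    HasDerivAt (fun s : ℝ => -(((|η| : ℝ) : ℂ) * s) * ker ψ (t, s, y) η)
      ((((|η| : ℝ) : ℂ) ^ 2 * (x : ℂ) ^ 2 - ((|η| : ℝ) : ℂ)) * ker ψ (t, x, y) η) x := by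
  have hl : HasDerivAt (fun s : ℝ => -(((|η| : ℝ) : ℂ) * (s : ℂ)))
      (-(((|η| : ℝ) : ℂ) * 1)) x := by
    exact (((hasDerivAt_id x).ofReal_comp).const_mul ((|η| : ℝ) : ℂ)).neg
  have h := hl.mul (hdx ψ t y η x)
  exact h.congr_deriv (by ring)

lemma hdy (t x η s : ℝ) :
    HasDerivAt (fun y' => ker ψ (t, x, y') η)
      ((Complex.I * (η : ℂ)) * ker ψ (t, x, s) η) s := by
  have h0 : HasDerivAt (fun y' : ℝ => y' * η - |η| * t) η s := by
    exact (((hasDerivAt_id s).mul_const η).sub (hasDerivAt_const s (|η| * t))).congr_deriv (by ring)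
  have h2 := ((h0.ofReal_comp).const_mul Complex.I).cexp
  have h3 := h2.const_mul (ψ η * ((|η| / π) ^ ((1 : ℝ) / 4) : ℝ) *
    (Real.exp (-(|η| * x ^ 2 / 2)) : ℝ))
  refine h3.congr_deriv ?_
  simp only [ker]
  push_cast
  ring

lemma hdy2 (t x η y : ℝ) :
    HasDerivAt (fun s : ℝ => (Complex.I * (η : ℂ)) * ker ψ (t, x, s) η)
      ((Complex.I * (η : ℂ)) * ((Complex.I * (η : ℂ)) * ker ψ (t, x, y) η)) y :=
  (hdy ψ t x η y).const_mul (Complex.I * (η : ℂ))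

end S15

set_option maxHeartbeats 1000000 in
/-- **ground-state solutions of the Grushin–Schrödinger
equation.** If `ψ` is smooth, compactly supported, and vanishes near `0`,
then `u(t,x,y) = ∫ ψ(η)(|η|/π)^{1/4} e^{-|η|x²/2} e^{i(yη-|η|t)} dη` is smooth
on `ℝ × ℝ²` and solves `i∂_t u + ∂ₓ²u + x²∂_y²u = 0` everywhere. -/
theorem statement_15 (ψ : ℝ → ℂ) (hψsmooth : ContDiff ℝ (⊤ : ℕ∞) ψ)
    (hψcompact : HasCompactSupport ψ)
    (hψ0 : ∃ ε > (0 : ℝ), ∀ η : ℝ, |η| < ε → ψ η = 0) :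
    ContDiff ℝ (⊤ : ℕ∞) (fun p : ℝ × ℝ × ℝ => slowSol ψ p.1 p.2.1 p.2.2) ∧
    ∀ t x y : ℝ,
      Complex.I * deriv (fun t' => slowSol ψ t' x y) t +
        deriv (deriv (fun x' => slowSol ψ t x' y)) x +
        ((x ^ 2 : ℝ) : ℂ) * deriv (deriv (fun y' => slowSol ψ t x y')) y = 0 := by
  have hker := S15.ker_smooth ψ hψsmooth hψ0
  have hK : IsCompact (tsupport ψ) := hψcompact
  have hker0 : ∀ p η, η ∉ tsupport ψ → S15.ker ψ p η = 0 := by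
    intro p η hη
    simp [S15.ker, image_eq_zero_of_notMem_tsupport hη]
  constructor
  · -- smoothness, via convolution with parameter
    have hgs : ∀ p : ℝ × ℝ × ℝ, ∀ η : ℝ, p ∈ (Set.univ : Set (ℝ × ℝ × ℝ)) →
        η ∉ -(tsupport ψ) → S15.ker ψ p (-η) = 0 := by
      intro p η _ hη
      refine hker0 p (-η) fun h => hη ?_
      simpa [Set.mem_neg] using h
    have hgsm : ContDiffOn ℝ (⊤ : ℕ∞)
        (↿(fun (p : ℝ × ℝ × ℝ) (η : ℝ) => S15.ker ψ p (-η)))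
        ((Set.univ : Set (ℝ × ℝ × ℝ)) ×ˢ (Set.univ : Set ℝ)) := by
      apply ContDiff.contDiffOn
      have hm : ContDiff ℝ (⊤ : ℕ∞)
          (fun q : (ℝ × ℝ × ℝ) × ℝ => ((q.1, -q.2) : (ℝ × ℝ × ℝ) × ℝ)) :=
        contDiff_fst.prodMk contDiff_snd.neg
      exact hker.comp hm
    have conv := contDiffOn_convolution_right_with_param_comp
      (L := ContinuousLinearMap.mul ℝ ℂ) (s := (Set.univ : Set (ℝ × ℝ × ℝ)))
      (v := fun _ : ℝ × ℝ × ℝ => (0 : ℝ))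
      (f := fun _ : ℝ => (1 : ℂ))
      (g := fun (p : ℝ × ℝ × ℝ) (η : ℝ) => S15.ker ψ p (-η))
      contDiffOn_const isOpen_univ (IsCompact.neg hψcompact) hgs
      (locallyIntegrable_const (μ := volume) 1) hgsm
    have he : (fun p : ℝ × ℝ × ℝ => slowSol ψ p.1 p.2.1 p.2.2) =
        fun p : ℝ × ℝ × ℝ =>
          convolution (fun _ : ℝ => (1 : ℂ)) (fun η : ℝ => S15.ker ψ p (-η))
            (ContinuousLinearMap.mul ℝ ℂ) volume (0 : ℝ) := by
      funext p
      show (∫ η, S15.ker ψ p η) = _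
      simp only [convolution, ContinuousLinearMap.mul_apply', one_mul, zero_sub, neg_neg]
    rw [he]
    exact contDiffOn_univ.mp conv
  · intro t x y
    -- the three two-variable families
    have hHt : ContDiff ℝ (⊤ : ℕ∞) ↿(fun s η => S15.ker ψ (s, x, y) η) := by
      have hm : ContDiff ℝ (⊤ : ℕ∞)
          (fun p : ℝ × ℝ => (((p.1, x, y) : ℝ × ℝ × ℝ), p.2)) :=
        (contDiff_fst.prodMk (contDiff_const.prodMk contDiff_const)).prodMk contDiff_snd
      exact hker.comp hm (g := fun q : (ℝ × ℝ × ℝ) × ℝ => S15.ker ψ q.1 q.2)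
    have hHx : ContDiff ℝ (⊤ : ℕ∞) ↿(fun s η => S15.ker ψ (t, s, y) η) := by
      have hm : ContDiff ℝ (⊤ : ℕ∞)
          (fun p : ℝ × ℝ => (((t, p.1, y) : ℝ × ℝ × ℝ), p.2)) :=
        (contDiff_const.prodMk (contDiff_fst.prodMk contDiff_const)).prodMk contDiff_snd
      exact hker.comp hm (g := fun q : (ℝ × ℝ × ℝ) × ℝ => S15.ker ψ q.1 q.2)
    have hHy : ContDiff ℝ (⊤ : ℕ∞) ↿(fun s η => S15.ker ψ (t, x, s) η) := by
      have hm : ContDiff ℝ (⊤ : ℕ∞)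
          (fun p : ℝ × ℝ => (((t, x, p.1) : ℝ × ℝ × ℝ), p.2)) :=
        (contDiff_const.prodMk (contDiff_const.prodMk contDiff_fst)).prodMk contDiff_snd
      exact hker.comp hm (g := fun q : (ℝ × ℝ × ℝ) × ℝ => S15.ker ψ q.1 q.2)
    have hst : ∀ s η, η ∉ tsupport ψ → S15.ker ψ (s, x, y) η = 0 := fun s η h => hker0 _ _ h
    have hsx : ∀ s η, η ∉ tsupport ψ → S15.ker ψ (t, s, y) η = 0 := fun s η h => hker0 _ _ h
    have hsy : ∀ s η, η ∉ tsupport ψ → S15.ker ψ (t, x, s) η = 0 := fun s η h => hker0 _ _ h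
    -- rewrite the three derivatives as integrals
    have e1 : deriv (fun t' => slowSol ψ t' x y) t =
        ∫ η, S15.pd (fun s η => S15.ker ψ (s, x, y) η) t η :=
      (S15.key _ hHt _ hK hst t).deriv
    have ex : deriv (fun x' => slowSol ψ t x' y) =
        fun s => ∫ η, S15.pd (fun s η => S15.ker ψ (t, s, y) η) s η :=
      S15.key_deriv _ hHx _ hK hsx
    have e2 : deriv (deriv (fun x' => slowSol ψ t x' y)) x =
        ∫ η, S15.pd (S15.pd (fun s η => S15.ker ψ (t, s, y) η)) x η := by
      rw [ex]
      exact (S15.key _ (S15.contDiff_pd _ hHx) _ hK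
        (S15.pd_support _ _ hsx) x).deriv
    have ey : deriv (fun y' => slowSol ψ t x y') =
        fun s => ∫ η, S15.pd (fun s η => S15.ker ψ (t, x, s) η) s η :=
      S15.key_deriv _ hHy _ hK hsy
    have e3 : deriv (deriv (fun y' => slowSol ψ t x y')) y =
        ∫ η, S15.pd (S15.pd (fun s η => S15.ker ψ (t, x, s) η)) y η := by
      rw [ey]
      exact (S15.key _ (S15.contDiff_pd _ hHy) _ hK
        (S15.pd_support _ _ hsy) y).deriv
    -- pointwise values of the derivatives
    have vt : ∀ η, S15.pd (fun s η => S15.ker ψ (s, x, y) η) t η =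
        -(Complex.I * ((|η| : ℝ) : ℂ)) * S15.ker ψ (t, x, y) η :=
      fun η => (S15.hdt ψ x y η t).deriv
    have vx : ∀ η, S15.pd (S15.pd (fun s η => S15.ker ψ (t, s, y) η)) x η =
        ((((|η| : ℝ) : ℂ)) ^ 2 * (x : ℂ) ^ 2 - ((|η| : ℝ) : ℂ)) * S15.ker ψ (t, x, y) η := by
      intro η
      have e : (fun s => S15.pd (fun s η => S15.ker ψ (t, s, y) η) s η) =
          fun s => -(((|η| : ℝ) : ℂ) * s) * S15.ker ψ (t, s, y) η :=
        funext fun s => (S15.hdx ψ t y η s).deriv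
      show deriv (fun s => S15.pd (fun s η => S15.ker ψ (t, s, y) η) s η) x = _
      rw [e]
      exact (S15.hdx2 ψ t y η x).deriv
    have vy : ∀ η, S15.pd (S15.pd (fun s η => S15.ker ψ (t, x, s) η)) y η =
        (Complex.I * (η : ℂ)) * ((Complex.I * (η : ℂ)) * S15.ker ψ (t, x, y) η) := by
      intro η
      have e : (fun s => S15.pd (fun s η => S15.ker ψ (t, x, s) η) s η) =
          fun s => (Complex.I * (η : ℂ)) * S15.ker ψ (t, x, s) η :=
        funext fun s => (S15.hdy ψ t x η s).deriv
      show deriv (fun s => S15.pd (fun s η => S15.ker ψ (t, x, s) η) s η) y = _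
      rw [e]
      exact (S15.hdy2 ψ t x η y).deriv
    -- integrability
    have mk_int : ∀ (H : ℝ → ℝ → ℂ), ContDiff ℝ (⊤ : ℕ∞) ↿H →
        (∀ s η, η ∉ tsupport ψ → H s η = 0) → ∀ s,
        Integrable (fun η => S15.pd H s η) := by
      intro H hH hs s
      refine Continuous.integrable_of_hasCompactSupport
        (((S15.contDiff_pd H hH).continuous).comp (Continuous.prodMk_right s)) ?_
      exact HasCompactSupport.intro hK fun η hη => S15.pd_support H _ hs s η hη
    have it : Integrable (fun η => S15.pd (fun s η => S15.ker ψ (s, x, y) η) t η) :=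
      mk_int _ hHt hst t
    have ixx : Integrable
        (fun η => S15.pd (S15.pd (fun s η => S15.ker ψ (t, s, y) η)) x η) :=
      mk_int _ (S15.contDiff_pd _ hHx) (S15.pd_support _ _ hsx) x
    have iyy : Integrable
        (fun η => S15.pd (S15.pd (fun s η => S15.ker ψ (t, x, s) η)) y η) :=
      mk_int _ (S15.contDiff_pd _ hHy) (S15.pd_support _ _ hsy) y
    rw [e1, e2, e3]
    have final : Complex.I * (∫ η, S15.pd (fun s η => S15.ker ψ (s, x, y) η) t η) +
        (∫ η, S15.pd (S15.pd (fun s η => S15.ker ψ (t, s, y) η)) x η) +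
        ((x ^ 2 : ℝ) : ℂ) *
          (∫ η, S15.pd (S15.pd (fun s η => S15.ker ψ (t, x, s) η)) y η) =
        ∫ η, (Complex.I * S15.pd (fun s η => S15.ker ψ (s, x, y) η) t η +
          S15.pd (S15.pd (fun s η => S15.ker ψ (t, s, y) η)) x η +
          ((x ^ 2 : ℝ) : ℂ) *
            S15.pd (S15.pd (fun s η => S15.ker ψ (t, x, s) η)) y η) := by
      have h1 : Integrable (fun η =>
          Complex.I * S15.pd (fun s η => S15.ker ψ (s, x, y) η) t η) volume :=
        it.const_mul _
      have h3 : Integrable (fun η => ((x ^ 2 : ℝ) : ℂ) *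
          S15.pd (S15.pd (fun s η => S15.ker ψ (t, x, s) η)) y η) volume :=
        iyy.const_mul _
      have h12 : Integrable (fun η =>
          Complex.I * S15.pd (fun s η => S15.ker ψ (s, x, y) η) t η +
          S15.pd (S15.pd (fun s η => S15.ker ψ (t, s, y) η)) x η) volume :=
        h1.add ixx
      rw [integral_add h12 h3, integral_add h1 ixx, integral_const_mul,
        integral_const_mul]
    rw [final]
    have hzero : ∀ η : ℝ,
        (Complex.I * S15.pd (fun s η => S15.ker ψ (s, x, y) η) t η +
          S15.pd (S15.pd (fun s η => S15.ker ψ (t, s, y) η)) x η +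
          ((x ^ 2 : ℝ) : ℂ) *
            S15.pd (S15.pd (fun s η => S15.ker ψ (t, x, s) η)) y η) = 0 := by
      intro η
      rw [vt η, vx η, vy η]
      have hA : (((|η| : ℝ) : ℂ)) ^ 2 = ((η : ℝ) : ℂ) ^ 2 := by
        norm_cast
        exact sq_abs η
      push_cast
      linear_combination (-(((|η| : ℝ) : ℂ) * S15.ker ψ (t, x, y) η) +
          (η : ℂ) ^ 2 * (x : ℂ) ^ 2 * S15.ker ψ (t, x, y) η) * Complex.I_sq +
        (x : ℂ) ^ 2 * S15.ker ψ (t, x, y) η * hA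
    rw [funext hzero]
    simp
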